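/- arXiv:2406.07644 — 2 statements merged into one kernel-verified Lean document; each statement's English description precedes it below -/
import Mathlib

section
/- With g_i and f as for a fully actuated mechanical system (g_i(q,q̇) = (0, ℓ_i(q)), [f, g_j](q,q̇) = (−ℓ_j(q), *)), the iterated Lie bracket [g_i, [f, g_j]] has the block form (0, *); i.e., its first n components vanish at every point. Consequently, since the columns ℓ_1(q), …, ℓ_n(q) of the invertible matrix L(q) span ℝ^n, [g_i, [f, g_j]](x) lies in the span of {g_1(x), …, g_n(x)} for every x. -/
noncomputable def lieBracket {E : Type*} [NormedAddCommGroup E] [NormedSpace ℝ E]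
    (a b : E → E) : E → E :=
  fun x => fderiv ℝ b x (a x) - fderiv ℝ a x (b x)

open Matrix ContinuousLinearMap in
/-- Proposition 1 of the paper: for a fully actuated mechanical system,
`[g_i, [f, g_j]]` has block form `(0, *)`, and hence lies in the span of
`{g_1(x), …, g_n(x)}` at every point. -/
theorem stmt3 {n : ℕ}
    (L : (Fin n → ℝ) → Matrix (Fin n) (Fin n) ℝ)
    (hLsmooth : ∀ i j, ContDiff ℝ (⊤ : ℕ∞) (fun q => L q i j))
    (hLinv : ∀ q, IsUnit (L q))
    (h : ((Fin n → ℝ) × (Fin n → ℝ)) → (Fin n → ℝ))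
    (hh : ContDiff ℝ (⊤ : ℕ∞) h)
    (f : ((Fin n → ℝ) × (Fin n → ℝ)) → ((Fin n → ℝ) × (Fin n → ℝ)))
    (g : Fin n → ((Fin n → ℝ) × (Fin n → ℝ)) → ((Fin n → ℝ) × (Fin n → ℝ)))
    (hf : ∀ x, f x = (x.2, h x))
    (hg : ∀ i x, g i x = (0, fun j => L x.1 j i))
    (i j : Fin n) :
    ∀ x : (Fin n → ℝ) × (Fin n → ℝ),
      (lieBracket (g i) (lieBracket f (g j)) x).1 = 0 ∧
      lieBracket (g i) (lieBracket f (g j)) x ∈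
        Submodule.span ℝ (Set.range fun k : Fin n => g k x) := by
  have hgfun : g = fun k (x : (Fin n → ℝ) × (Fin n → ℝ)) =>
      ((0 : Fin n → ℝ), fun m => L x.1 m k) := by
    funext k x; exact hg k x
  have hffun : f = fun x => (x.2, h x) := funext hf
  subst hgfun hffun
  set ℓ : Fin n → (Fin n → ℝ) → (Fin n → ℝ) := fun k q m => L q m k with hℓdef
  have hℓ : ∀ k, ContDiff ℝ (⊤ : ℕ∞) (ℓ k) := fun k => contDiff_pi.mpr fun m => hLsmooth m k
  have hgsm : ∀ k, ContDiff ℝ (⊤ : ℕ∞)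
      (fun x : (Fin n → ℝ) × (Fin n → ℝ) => ((0 : Fin n → ℝ), ℓ k x.1)) :=
    fun k => contDiff_const.prodMk ((hℓ k).comp contDiff_fst)
  have hfsm : ContDiff ℝ (⊤ : ℕ∞)
      (fun x : (Fin n → ℝ) × (Fin n → ℝ) => (x.2, h x)) := contDiff_snd.prodMk hh
  have hgD : ∀ (k : Fin n) (y : (Fin n → ℝ) × (Fin n → ℝ)),
      HasFDerivAt (fun x : (Fin n → ℝ) × (Fin n → ℝ) => ((0 : Fin n → ℝ), ℓ k x.1))
        ((0 : ((Fin n → ℝ) × (Fin n → ℝ)) →L[ℝ] (Fin n → ℝ)).prod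
          ((fderiv ℝ (ℓ k) y.1).comp (fst ℝ (Fin n → ℝ) (Fin n → ℝ)))) y := by
    intro k y
    exact (hasFDerivAt_const _ _).prodMk
      ((((hℓ k).differentiable (by simp) y.1).hasFDerivAt).comp y hasFDerivAt_fst)
  have hfD : ∀ y : (Fin n → ℝ) × (Fin n → ℝ),
      HasFDerivAt (fun x : (Fin n → ℝ) × (Fin n → ℝ) => (x.2, h x))
        ((snd ℝ (Fin n → ℝ) (Fin n → ℝ)).prod (fderiv ℝ h y)) y := fun y =>
    hasFDerivAt_snd.prodMk ((hh.differentiable (by simp) y).hasFDerivAt)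
  set B := lieBracket (fun x : (Fin n → ℝ) × (Fin n → ℝ) => (x.2, h x))
      (fun x : (Fin n → ℝ) × (Fin n → ℝ) => ((0 : Fin n → ℝ), ℓ j x.1)) with hBdef
  have hB1 : ∀ y, (B y).1 = -(ℓ j y.1) := by
    intro y
    rw [hBdef]
    simp only [lieBracket, (hgD j y).fderiv, (hfD y).fderiv]
    simp
  have hBsm : ContDiff ℝ (⊤ : ℕ∞) B := by
    rw [hBdef]
    have h1 : ContDiff ℝ (⊤ : ℕ∞) (fun y : (Fin n → ℝ) × (Fin n → ℝ) =>
        fderiv ℝ (fun x : (Fin n → ℝ) × (Fin n → ℝ) => ((0 : Fin n → ℝ), ℓ j x.1)) y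
          (y.2, h y)) :=
      ((hgsm j).fderiv_right (by simp)).clm_apply hfsm
    have h2 : ContDiff ℝ (⊤ : ℕ∞) (fun y : (Fin n → ℝ) × (Fin n → ℝ) =>
        fderiv ℝ (fun x : (Fin n → ℝ) × (Fin n → ℝ) => (x.2, h x)) y
          ((0 : Fin n → ℝ), ℓ j y.1)) :=
      (hfsm.fderiv_right (by simp)).clm_apply (hgsm j)
    exact h1.sub h2
  intro x
  -- derivative of the first component of B
  have hBfst : HasFDerivAt (fun y => (B y).1)
      ((fst ℝ (Fin n → ℝ) (Fin n → ℝ)).comp (fderiv ℝ B x)) x :=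
    ((hBsm.differentiable (by simp) x).hasFDerivAt).fst
  have hBfst' : HasFDerivAt (fun y : (Fin n → ℝ) × (Fin n → ℝ) => -(ℓ j y.1))
      ((fst ℝ (Fin n → ℝ) (Fin n → ℝ)).comp (fderiv ℝ B x)) x := by
    have he : (fun y => (B y).1) = fun y : (Fin n → ℝ) × (Fin n → ℝ) => -(ℓ j y.1) :=
      funext fun y => hB1 y
    rwa [he] at hBfst
  have hneg : HasFDerivAt (fun y : (Fin n → ℝ) × (Fin n → ℝ) => -(ℓ j y.1))
      (-((fderiv ℝ (ℓ j) x.1).comp (fst ℝ (Fin n → ℝ) (Fin n → ℝ)))) x :=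
    ((((hℓ j).differentiable (by simp) x.1).hasFDerivAt).comp x hasFDerivAt_fst).neg
  have huniq : (fst ℝ (Fin n → ℝ) (Fin n → ℝ)).comp (fderiv ℝ B x)
      = -((fderiv ℝ (ℓ j) x.1).comp (fst ℝ (Fin n → ℝ) (Fin n → ℝ))) :=
    hBfst'.unique hneg
  -- first component of the iterated bracket is zero
  have e1 : (fderiv ℝ B x ((0 : Fin n → ℝ), ℓ i x.1)).1 = 0 := by
    have : ((fst ℝ (Fin n → ℝ) (Fin n → ℝ)).comp (fderiv ℝ B x))
        ((0 : Fin n → ℝ), ℓ i x.1)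
        = (-((fderiv ℝ (ℓ j) x.1).comp (fst ℝ (Fin n → ℝ) (Fin n → ℝ))))
          ((0 : Fin n → ℝ), ℓ i x.1) := by rw [huniq]
    simpa using this
  have e2 : (fderiv ℝ (fun x : (Fin n → ℝ) × (Fin n → ℝ) =>
      ((0 : Fin n → ℝ), ℓ i x.1)) x (B x)).1 = 0 := by
    rw [(hgD i x).fderiv]
    simp
  have hfc : (lieBracket
      (fun x : (Fin n → ℝ) × (Fin n → ℝ) => ((0 : Fin n → ℝ), ℓ i x.1)) B x).1 = 0 := by
    simp only [lieBracket, Prod.fst_sub, e1, e2, sub_zero]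
  refine ⟨hfc, ?_⟩
  -- membership in the span
  set w := lieBracket
      (fun x : (Fin n → ℝ) × (Fin n → ℝ) => ((0 : Fin n → ℝ), ℓ i x.1)) B x with hwdef
  rw [Submodule.mem_span_range_iff_exists_fun]
  refine ⟨(L x.1)⁻¹ *ᵥ w.2, ?_⟩
  have hdet : IsUnit (L x.1).det := (Matrix.isUnit_iff_isUnit_det _).mp (hLinv x.1)
  have hLL : L x.1 * (L x.1)⁻¹ = 1 := Matrix.mul_nonsing_inv _ hdet
  have hsum2 : L x.1 *ᵥ ((L x.1)⁻¹ *ᵥ w.2) = w.2 := by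
    rw [Matrix.mulVec_mulVec, hLL, Matrix.one_mulVec]
  refine Prod.ext ?_ ?_
  · simp [Prod.fst_sum, hfc]
  · funext m
    rw [Prod.snd_sum, Finset.sum_apply]
    conv_rhs => rw [← hsum2]
    simp [Matrix.mulVec, dotProduct, hℓdef, mul_comm]
end

section
/- For a fully actuated mechanical system on ℝ^{2n} (f(q,q̇)=(q̇,h), g_i(q,q̇)=(0,ℓ_i(q)), L(q) invertible), suppose a triple (x, u, λ) with λ(t) ≠ 0 on [0,T] is an extremal along which, for each i, φ_i(t) = ⟨λ(t), g_i(x(t))⟩. If there exists a nontrivial interval on which φ_i ≡ 0 and φ_i' ≡ 0 simultaneously for all i = 1, …, n (i.e., the extremal is u_i-singular of order ≥ 2 in every input on a common interval), then a contradiction follows; hence at least one input u_k must be bang-bang, in the sense that the set {t : φ_k(t) = 0 and φ_k'(t) = 0} does not contain any interval. -/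
open Matrix

/-- Inner product on ℝ^n × ℝ^n (identified with ℝ^{2n}). -/
def pip {n : ℕ} (p v : (Fin n → ℝ) × (Fin n → ℝ)) : ℝ :=
  p.1 ⬝ᵥ v.1 + p.2 ⬝ᵥ v.2


/-- `pip p` as a linear map in the second argument. -/
noncomputable def pipL {n : ℕ} (p : (Fin n → ℝ) × (Fin n → ℝ)) :
    ((Fin n → ℝ) × (Fin n → ℝ)) →ₗ[ℝ] ℝ where
  toFun v := p.1 ⬝ᵥ v.1 + p.2 ⬝ᵥ v.2
  map_add' u v := by simp [dotProduct_add]; ring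
  map_smul' c v := by simp [dotProduct_smul]; ring

lemma pip_eq_zero_of_span {n : ℕ} (p : (Fin n → ℝ) × (Fin n → ℝ))
    (S : Set ((Fin n → ℝ) × (Fin n → ℝ)))
    (hS : Submodule.span ℝ S = ⊤)
    (hz : ∀ v ∈ S, p.1 ⬝ᵥ v.1 + p.2 ⬝ᵥ v.2 = 0) : p = 0 := by
  have hker : Submodule.span ℝ S ≤ LinearMap.ker (pipL p) := by
    rw [Submodule.span_le]
    intro v hv
    exact hz v hv
  rw [hS, top_le_iff, LinearMap.ker_eq_top] at hker
  have hp : p.1 ⬝ᵥ p.1 + p.2 ⬝ᵥ p.2 = 0 := by simpa [pipL] using congrFun (congrArg (fun l => (l : _ →ₗ[ℝ] ℝ).toFun) hker) p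
  have h1 : (0:ℝ) ≤ p.1 ⬝ᵥ p.1 := by
    simpa [dotProduct] using Finset.sum_nonneg fun i _ => mul_self_nonneg (p.1 i)
  have h2 : (0:ℝ) ≤ p.2 ⬝ᵥ p.2 := by
    simpa [dotProduct] using Finset.sum_nonneg fun i _ => mul_self_nonneg (p.2 i)
  have e1 : p.1 ⬝ᵥ p.1 = 0 := le_antisymm (by linarith) h1
  have e2 : p.2 ⬝ᵥ p.2 = 0 := le_antisymm (by linarith) h2
  have := (dotProduct_self_eq_zero).mp e1
  have := (dotProduct_self_eq_zero).mp e2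
  exact Prod.ext ‹p.1 = 0› ‹p.2 = 0›

/-- Corollary to Lemma 1: for a fully actuated mechanical system with a
nonvanishing costate, there is no nontrivial interval on which all switching functions
and their derivatives vanish simultaneously; hence on any nontrivial interval at least
one input `u_k` is bang-bang, in the sense that the singular set
`{t : φ_k(t) = 0 ∧ φ_k'(t) = 0}` does not contain that interval. -/
theorem stmt6 {n : ℕ} (hn : 0 < n) (T : ℝ) (hT : 0 < T)
    (L : (Fin n → ℝ) → Matrix (Fin n) (Fin n) ℝ)
    (hLinv : ∀ q, IsUnit (L q))
    (h : ((Fin n → ℝ) × (Fin n → ℝ)) → (Fin n → ℝ))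
    (hh : ContDiff ℝ (⊤ : ℕ∞) h)
    (f : ((Fin n → ℝ) × (Fin n → ℝ)) → ((Fin n → ℝ) × (Fin n → ℝ)))
    (g : Fin n → ((Fin n → ℝ) × (Fin n → ℝ)) → ((Fin n → ℝ) × (Fin n → ℝ)))
    (hf : ∀ x, f x = (x.2, h x))
    (hg : ∀ i x, g i x = (0, fun j => L x.1 j i))
    (x : ℝ → (Fin n → ℝ) × (Fin n → ℝ))
    (lam : ℝ → (Fin n → ℝ) × (Fin n → ℝ))
    (hframe : ∀ t ∈ Set.Icc (0 : ℝ) T,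
      Submodule.span ℝ
        (Set.range
          (Sum.elim (fun i => g i (x t)) (fun i => lieBracket f (g i) (x t)) :
            Fin n ⊕ Fin n → (Fin n → ℝ) × (Fin n → ℝ))) = ⊤)
    (hlam : ∀ t ∈ Set.Icc (0 : ℝ) T, lam t ≠ 0)
    (φ φ' : Fin n → ℝ → ℝ)
    (hφ : ∀ i t, φ i t = pip (lam t) (g i (x t)))
    (hφ' : ∀ i t, φ' i t = pip (lam t) (lieBracket f (g i) (x t))) :
    (¬ ∃ a b : ℝ, a < b ∧ Set.Ioo a b ⊆ Set.Icc 0 T ∧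
        ∀ i : Fin n, ∀ t ∈ Set.Ioo a b, φ i t = 0 ∧ φ' i t = 0) ∧
    (∀ a b : ℝ, a < b → Set.Ioo a b ⊆ Set.Icc 0 T →
        ∃ k : Fin n, ¬ ∀ t ∈ Set.Ioo a b, φ k t = 0 ∧ φ' k t = 0) := by
  have key : ¬ ∃ a b : ℝ, a < b ∧ Set.Ioo a b ⊆ Set.Icc 0 T ∧
      ∀ i : Fin n, ∀ t ∈ Set.Ioo a b, φ i t = 0 ∧ φ' i t = 0 := by
    rintro ⟨a, b, hab, hsub, hall⟩
    set t := (a + b) / 2 with ht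
    have htm : t ∈ Set.Ioo a b := ⟨by linarith, by linarith⟩
    have htT : t ∈ Set.Icc (0 : ℝ) T := hsub htm
    apply hlam t htT
    apply pip_eq_zero_of_span (lam t) _ (hframe t htT)
    rintro v ⟨i, rfl⟩
    rcases i with i | i
    · have := (hall i t htm).1
      rw [hφ i t] at this
      simpa [pip] using this
    · have := (hall i t htm).2
      rw [hφ' i t] at this
      simpa [pip] using this
  refine ⟨key, fun a b hab hsub => ?_⟩
  by_contra hcon
  push_neg at hcon
  exact key ⟨a, b, hab, hsub, hcon⟩
end
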